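/- Let f be a λ-eigenfunction of F_q^n with λ = (q−1)n−qh. For each vertex α of weight h with support I = s(α), the Fourier coefficient of f at α satisfies f̂(α) = Σ_{β ∈ Γ^I} conj(ξ^{⟨α,β⟩}) · η(α,β), where η(α,β) = Σ_{γ ∈ Γ^{Ī}(β)} f(γ) is the sum of f over the orthogonal face through β. Consequently, f is uniquely determined by its values on the ball B_h of radius h around 0. -/

import Mathlib

/-!
The Fourier formula is a regrouping: `⟨α, γ⟩` only depends on the coordinates of `γ` in the
support `I` of `α`, so summing over each orthogonal face `Γ^Ī(β)` first produces `η(α, β)`.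

For uniqueness, `d = f - g` is a `λ`-eigenfunction vanishing on `B_h`. For a primitive
additive character `ψ` of the alphabet, each `x ↦ ψ ⟨a, x⟩` is an eigenfunction of the
(self-adjoint) adjacency operator, with eigenvalue `(q - 1) n - q wt(a)`, so the transform
`d̂(a) = ∑ₓ d(x) ψ ⟨a, x⟩` vanishes unless `wt(a) = h`. If `wt(a) = h`, the sum of `d̂(a')` over
all `a'` agreeing with `a` on its support only involves the values of `d` on vectors supported
in that support, which lie in `B_h`; hence it is zero, and every `a' ≠ a` in it has weight
`> h`, so `d̂(a) = 0` as well. Fourier inversion gives `d = 0`.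
-/

def wt {q n : ℕ} [NeZero q] (α : Fin n → ZMod q) : ℕ :=
  (Finset.univ.filter (fun j => α j ≠ 0)).card

open Finset

namespace HammingGraph

variable {ι R : Type*} [Fintype ι]

lemma dotProduct_eq_of_eqOn_support [NonUnitalNonAssocSemiring R] {a β γ : ι → R}
    (h : ∀ j, a j ≠ 0 → γ j = β j) : a ⬝ᵥ γ = a ⬝ᵥ β :=
  sum_congr rfl fun j _ => by
    obtain haj | haj := eq_or_ne (a j) 0
    · rw [haj, zero_mul, zero_mul]
    · rw [h j haj]

section Support

variable [Zero R] [DecidableEq R]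

lemma hammingNorm_le_of_support_subset {x y : ι → R} (h : ∀ j, x j ≠ 0 → y j ≠ 0) :
    hammingNorm x ≤ hammingNorm y :=
  card_le_card fun j => by simpa using h j

lemma hammingNorm_lt_of_eqOn_support {a b : ι → R} (h : ∀ j, a j ≠ 0 → b j = a j)
    (hba : b ≠ a) : hammingNorm a < hammingNorm b := by
  obtain ⟨j, hj⟩ := Function.ne_iff.1 hba
  have haj : a j = 0 := by_contra fun haj => hj (h j haj)
  refine card_lt_card ⟨fun i => by simpa using fun hi => h i hi ▸ hi, fun hsub => ?_⟩
  simpa [haj] using @hsub j (by simpa [haj] using hj)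

end Support

def eigenvalue (R ι : Type*) [Fintype R] [Fintype ι] (k : ℕ) : ℂ :=
  ((Fintype.card R : ℂ) - 1) * Fintype.card ι - Fintype.card R * k

lemma eigenvalue_injective [Fintype R] [Nonempty R] : Function.Injective (eigenvalue R ι) :=
  fun k k' h => by
    have hR : (Fintype.card R : ℂ) ≠ 0 := Nat.cast_ne_zero.2 Fintype.card_ne_zero
    simpa [eigenvalue, hR] using h

variable [DecidableEq ι]

section Faces

variable [Fintype R] [DecidableEq R]

-- `face I` and `orthFace I β` are the faces `Γ^I` and `Γ^Ī(β)` of the paper.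
def face [Zero R] (s : Finset ι) : Finset (ι → R) :=
  univ.filter fun β => ∀ j ∈ sᶜ, β j = 0

def orthFace (s : Finset ι) (β : ι → R) : Finset (ι → R) :=
  univ.filter fun γ => ∀ j ∈ s, γ j = β j

@[simp]
lemma mem_face [Zero R] {s : Finset ι} {β : ι → R} : β ∈ face s ↔ ∀ j ∉ s, β j = 0 := by
  simp [face]

@[simp]
lemma mem_orthFace {s : Finset ι} {β γ : ι → R} : γ ∈ orthFace s β ↔ ∀ j ∈ s, γ j = β j := by
  simp [orthFace]

lemma sum_eq_sum_face_sum_orthFace [Zero R] {M : Type*} [AddCommMonoid M] (s : Finset ι)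
    (φ : (ι → R) → M) : ∑ β, φ β = ∑ β ∈ face s, ∑ γ ∈ orthFace s β, φ γ := by
  let proj : (ι → R) → ι → R := fun γ j => if j ∈ s then γ j else 0
  rw [← sum_fiberwise_of_maps_to (g := proj) (t := face s) fun γ _ => by simp_all [proj]]
  refine sum_congr rfl fun β hβ => sum_congr (ext fun γ => ?_) fun _ _ => rfl
  rw [mem_face] at hβ
  simp only [mem_orthFace, mem_filter, mem_univ, true_and, proj, funext_iff]
  refine ⟨fun h j hj => by simpa [hj] using h j, fun h j => ?_⟩
  split_ifs with hj
  exacts [h j hj, (hβ j hj).symm]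

lemma sum_mul_dotProduct_eq_sum_face [NonUnitalNonAssocSemiring R] {M : Type*} [CommSemiring M]
    (w : R → M) (f : (ι → R) → M) (a : ι → R) :
    ∑ β, f β * w (a ⬝ᵥ β) = ∑ β ∈ face (univ.filter (a · ≠ 0)),
      w (a ⬝ᵥ β) * ∑ γ ∈ orthFace (univ.filter (a · ≠ 0)) β, f γ := by
  rw [sum_eq_sum_face_sum_orthFace (univ.filter (a · ≠ 0))]
  refine sum_congr rfl fun β _ => ?_
  rw [mul_sum]
  refine sum_congr rfl fun γ hγ => ?_
  rw [dotProduct_eq_of_eqOn_support fun j hj => mem_orthFace.1 hγ j (by simpa using hj),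
    mul_comm]

end Faces

section Adjacency

variable [Fintype R] [DecidableEq R]

def adj {M : Type*} [AddCommMonoid M] (F : (ι → R) → M) (x : ι → R) : M :=
  ∑ β ∈ univ.filter (hammingDist x · = 1), F β

lemma adj_sub {M : Type*} [AddCommGroup M] (F G : (ι → R) → M) (x : ι → R) :
    adj (F - G) x = adj F x - adj G x :=
  sum_sub_distrib F G

lemma sum_mul_adj_comm {M : Type*} [NonUnitalNonAssocSemiring M] (F G : (ι → R) → M) :
    ∑ x, F x * adj G x = ∑ x, adj F x * G x := by
  simp only [adj, sum_filter, mul_sum, sum_mul]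
  rw [sum_comm]
  simp_rw [hammingDist_comm]
  refine sum_congr rfl fun _ _ => sum_congr rfl fun _ _ => ?_
  split_ifs <;> simp

end Adjacency

section Sphere

variable [AddCommGroup R] [DecidableEq R]

lemma eq_single_of_hammingNorm_eq_one {z : ι → R} (hz : hammingNorm z = 1) :
    ∃ j, z j ≠ 0 ∧ Pi.single j (z j) = z := by
  obtain ⟨j, hj⟩ := card_eq_one.1 hz
  have hsupp : ∀ i, z i ≠ 0 ↔ i = j := fun i => by
    simpa using congrArg (i ∈ ·) hj
  refine ⟨j, (hsupp j).2 rfl, funext fun i => ?_⟩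
  rcases eq_or_ne i j with rfl | hij
  · simp
  · simpa [hij, eq_comm] using mt (hsupp i).1 hij

variable [Fintype R]

lemma sum_hammingNorm_eq_one {M : Type*} [AddCommMonoid M] (G : (ι → R) → M) :
    ∑ z ∈ univ.filter (hammingNorm · = 1), G z
      = ∑ j, ∑ c ∈ univ.erase 0, G (Pi.single j c) := by
  rw [← sum_product']
  refine (sum_bij (fun p _ => Pi.single p.1 p.2) ?_ ?_ ?_ fun _ _ => rfl).symm
  · rintro ⟨j, c⟩ hc
    rw [mem_product, mem_erase] at hc
    simp [hammingNorm, Pi.single_apply, hc.2.1, filter_eq']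
  · rintro ⟨j, c⟩ hc ⟨j', c'⟩ - h
    rw [mem_product, mem_erase] at hc
    obtain rfl : j = j' := by
      by_contra hne
      simpa [hne, hc.2.1] using congrFun h j
    simpa using congrFun h j
  · intro z hz
    obtain ⟨j, hj, hz⟩ := eq_single_of_hammingNorm_eq_one (mem_filter.1 hz).2
    exact ⟨(j, z j), by simp [hj], hz⟩

lemma adj_eq_sum_sum_single {M : Type*} [AddCommMonoid M] (F : (ι → R) → M) (x : ι → R) :
    adj F x = ∑ j, ∑ c ∈ univ.erase 0, F (x + Pi.single j c) := by
  rw [← sum_hammingNorm_eq_one (fun z => F (x + z))]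
  have hdist (β : ι → R) : hammingDist x β = hammingNorm (β - x) := by
    rw [hammingDist_eq_hammingNorm, neg_add_eq_sub]
  refine sum_nbij' (· - x) (x + ·) ?_ ?_ ?_ ?_ ?_ <;> simp [hdist]

end Sphere

lemma _root_.AddChar.map_sum_eq_prod {A M κ : Type*} [AddCommMonoid A] [CommMonoid M]
    (ψ : AddChar A M) (s : Finset κ) (f : κ → A) : ψ (∑ i ∈ s, f i) = ∏ i ∈ s, ψ (f i) :=
  map_prod ψ.toMonoidHom (fun i => Multiplicative.ofAdd (f i)) s

section Characters

variable [CommRing R] {ψ : AddChar R ℂ}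

lemma sum_piFinset_addChar_dotProduct (t : ι → Finset R) (x : ι → R) :
    ∑ a ∈ Fintype.piFinset t, ψ (a ⬝ᵥ x) = ∏ j, ∑ c ∈ t j, ψ (c * x j) := by
  simp_rw [dotProduct, AddChar.map_sum_eq_prod]
  exact (prod_univ_sum t fun j c => ψ (c * x j)).symm

variable [Fintype R] [DecidableEq R]

lemma adj_addChar_dotProduct (hψ : ψ.IsPrimitive) (a x : ι → R) :
    adj (fun y => ψ (a ⬝ᵥ y)) x = eigenvalue R ι (hammingNorm a) * ψ (a ⬝ᵥ x) := by
  have hline (j : ι) : ∑ c ∈ univ.erase 0, ψ (a j * c)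
      = ((Fintype.card R : ℂ) - 1) - if a j ≠ 0 then (Fintype.card R : ℂ) else 0 := by
    rw [sum_erase_eq_sub (mem_univ 0), mul_zero, AddChar.map_zero_eq_one]
    simp_rw [mul_comm (a j)]
    rw [AddChar.sum_mulShift _ hψ]
    split_ifs <;> simp_all
  simp_rw [adj_eq_sum_sum_single, dotProduct_add, dotProduct_single, AddChar.map_add_eq_mul,
    ← Finset.mul_sum, hline]
  rw [mul_comm, sum_sub_distrib, sum_const, ← sum_filter, sum_const, card_univ, nsmul_eq_mul,
    nsmul_eq_mul, eigenvalue, hammingNorm]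
  ring

def dft (ψ : AddChar R ℂ) (d : (ι → R) → ℂ) (a : ι → R) : ℂ :=
  ∑ x, d x * ψ (a ⬝ᵥ x)

variable {d : (ι → R) → ℂ} {h : ℕ}

lemma dft_eq_zero_of_hammingNorm_ne (hψ : ψ.IsPrimitive)
    (hd : ∀ x, adj d x = eigenvalue R ι h * d x) {a : ι → R} (ha : hammingNorm a ≠ h) :
    dft ψ d a = 0 := by
  have key : eigenvalue R ι (hammingNorm a) * dft ψ d a = eigenvalue R ι h * dft ψ d a :=
    calc eigenvalue R ι (hammingNorm a) * dft ψ d a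
        = ∑ x, d x * adj (fun y => ψ (a ⬝ᵥ y)) x := by
          simp_rw [adj_addChar_dotProduct hψ, dft, mul_sum]
          exact sum_congr rfl fun _ _ => by ring
      _ = ∑ x, adj d x * ψ (a ⬝ᵥ x) := sum_mul_adj_comm _ _
      _ = eigenvalue R ι h * dft ψ d a := by simp_rw [hd, dft, mul_sum, mul_assoc]
  by_contra hT
  exact ha (eigenvalue_injective (mul_right_cancel₀ hT key))

lemma sum_piFinset_dft_eq_zero (hψ : ψ.IsPrimitive) (s : Finset ι)
    (hd : ∀ x, (∀ j ∉ s, x j = 0) → d x = 0) (t : ι → Finset R) (ht : ∀ j ∉ s, t j = univ) :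
    ∑ a ∈ Fintype.piFinset t, dft ψ d a = 0 := by
  simp only [dft]
  rw [sum_comm]
  refine sum_eq_zero fun x _ => ?_
  rw [← mul_sum, sum_piFinset_addChar_dotProduct]
  by_cases hx : ∀ j ∉ s, x j = 0
  · rw [hd x hx, zero_mul]
  push Not at hx
  obtain ⟨j, hj, hxj⟩ := hx
  refine mul_eq_zero_of_right _ (prod_eq_zero (mem_univ j) ?_)
  simp [ht j hj, AddChar.sum_mulShift _ hψ, hxj]

lemma dft_eq_zero_of_hammingNorm_eq (hψ : ψ.IsPrimitive)
    (hd : ∀ x, adj d x = eigenvalue R ι h * d x) (hd₀ : ∀ x, hammingNorm x ≤ h → d x = 0)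
    {a : ι → R} (ha : hammingNorm a = h) : dft ψ d a = 0 := by
  set t : ι → Finset R := fun j => if a j ≠ 0 then {a j} else univ
  have hsum := sum_piFinset_dft_eq_zero hψ (univ.filter (a · ≠ 0))
    (fun x hx => hd₀ x (ha ▸ hammingNorm_le_of_support_subset
      fun j hxj haj => hxj (hx j (by simpa using haj))))
    t (fun j hj => by simp_all [t])
  have hmem : a ∈ Fintype.piFinset t := Fintype.mem_piFinset.2 fun j => by
    by_cases hj : a j = 0 <;> simp [t, hj]
  have hother (b) (hb : b ∈ Fintype.piFinset t) (hba : b ≠ a) : dft ψ d b = 0 := by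
    refine dft_eq_zero_of_hammingNorm_ne hψ hd (ha ▸ ?_)
    refine (hammingNorm_lt_of_eqOn_support (fun j hj => ?_) hba).ne'
    simpa [t, hj] using Fintype.mem_piFinset.1 hb j
  rwa [sum_eq_single_of_mem a hmem hother] at hsum

lemma eq_zero_of_dft_eq_zero (hψ : ψ.IsPrimitive) (hT : ∀ a, dft ψ d a = 0) : d = 0 := by
  funext y
  have hinv : ∑ a, dft ψ d a * ψ (-(a ⬝ᵥ y)) = (Fintype.card R : ℂ) ^ Fintype.card ι * d y :=
    calc ∑ a, dft ψ d a * ψ (-(a ⬝ᵥ y))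
        = ∑ x, d x * ∑ a ∈ Fintype.piFinset fun _ => univ, ψ (a ⬝ᵥ (x - y)) := by
          simp_rw [Fintype.piFinset_univ, dft, sum_mul, dotProduct_sub, sub_eq_add_neg,
            AddChar.map_add_eq_mul, mul_sum, mul_assoc]
          exact sum_comm
      _ = ∑ x, d x * if x = y then (Fintype.card R : ℂ) ^ Fintype.card ι else 0 := by
          refine sum_congr rfl fun x _ => ?_
          rw [sum_piFinset_addChar_dotProduct, prod_congr rfl fun j _ => AddChar.sum_mulShift _ hψ]
          simp [Fintype.prod_ite_zero, sub_eq_zero, funext_iff]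
      _ = (Fintype.card R : ℂ) ^ Fintype.card ι * d y := by simp [mul_comm]
  simpa [hT] using hinv

theorem eq_of_eqOn_ball (hψ : ψ.IsPrimitive) {f g : (ι → R) → ℂ}
    (hf : ∀ x, adj f x = eigenvalue R ι h * f x) (hg : ∀ x, adj g x = eigenvalue R ι h * g x)
    (hfg : ∀ x, hammingNorm x ≤ h → f x = g x) : f = g := by
  have hd (x : ι → R) : adj (f - g) x = eigenvalue R ι h * (f - g) x := by
    rw [adj_sub, hf, hg, Pi.sub_apply, mul_sub]
  have hd₀ (x : ι → R) (hx : hammingNorm x ≤ h) : (f - g) x = 0 := sub_eq_zero.2 (hfg x hx)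
  refine sub_eq_zero.1 (eq_zero_of_dft_eq_zero hψ fun a => ?_)
  obtain ha | ha := eq_or_ne (hammingNorm a) h
  · exact dft_eq_zero_of_hammingNorm_eq hψ hd hd₀ ha
  · exact dft_eq_zero_of_hammingNorm_ne hψ hd ha

end Characters

end HammingGraph

open HammingGraph in
theorem stmt14_general (q n h : ℕ) [NeZero q] (ξ : ℂ)
    (f : (Fin n → ZMod q) → ℂ)
    (hf : ∀ α, ∑ β ∈ Finset.univ.filter (fun β => hammingDist α β = 1), f β
            = (((q:ℂ)-1)*n - q*h) * f α) :
    (∀ α : Fin n → ZMod q, wt α = h →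
      ∑ β : Fin n → ZMod q, f β * (starRingEnd ℂ) (ξ ^ ((∑ j, α j * β j : ZMod q)).val)
        = ∑ β ∈ Finset.univ.filter
            (fun β : Fin n → ZMod q =>
              ∀ j ∈ (Finset.univ.filter (fun j => α j ≠ 0))ᶜ, β j = 0),
            (starRingEnd ℂ) (ξ ^ ((∑ j, α j * β j : ZMod q)).val) *
              ∑ γ ∈ Finset.univ.filter
                (fun γ : Fin n → ZMod q =>
                  ∀ j ∈ Finset.univ.filter (fun j => α j ≠ 0), γ j = β j), f γ) ∧
    (∀ g : (Fin n → ZMod q) → ℂ,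
      (∀ α, ∑ β ∈ Finset.univ.filter (fun β => hammingDist α β = 1), g β
          = (((q:ℂ)-1)*n - q*h) * g α) →
      (∀ β, wt β ≤ h → f β = g β) → f = g) := by
  refine ⟨fun α _ => ?_, fun g hg hfg => ?_⟩
  · have := sum_mul_dotProduct_eq_sum_face (fun c => starRingEnd ℂ (ξ ^ c.val)) f α
    simp only [face, orthFace, dotProduct] at this
    -- the two sides differ only in the `Decidable` instances of the filters
    convert this
  have heig (F : (Fin n → ZMod q) → ℂ) (hF : ∀ α, adj F α = ((q - 1) * n - q * h) * F α) (x) :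
      adj F x = eigenvalue (ZMod q) (Fin n) h * F x := by
    simpa [eigenvalue, ZMod.card] using hF x
  exact eq_of_eqOn_ball (ZMod.isPrimitive_stdAddChar q) (heig f hf) (heig g hg) hfg

/-- For a λ-eigenfunction f and a vertex α of weight h with support I, the Fourier
coefficient f̂(α) equals Σ_{β ∈ Γ^I} conj(ξ^⟨α,β⟩)·η(α,β), where η(α,β) is the sum
of f over the orthogonal face Γ^{Ī}(β); consequently f is uniquely determined by
its values on the ball of radius h around 0. -/
theorem stmt14 (q n h : ℕ) [NeZero q] (hq : 2 ≤ q) (hh : h ≤ n)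
    (ξ : ℂ) (hξ : ξ = Complex.exp (2 * Real.pi * Complex.I / q))
    (f : (Fin n → ZMod q) → ℂ)
    (hf : ∀ α, ∑ β ∈ Finset.univ.filter (fun β => hammingDist α β = 1), f β
            = (((q:ℂ)-1)*n - q*h) * f α) :
    (∀ α : Fin n → ZMod q, wt α = h →
      ∑ β : Fin n → ZMod q, f β * (starRingEnd ℂ) (ξ ^ ((∑ j, α j * β j : ZMod q)).val)
        = ∑ β ∈ Finset.univ.filter
            (fun β : Fin n → ZMod q =>
              ∀ j ∈ (Finset.univ.filter (fun j => α j ≠ 0))ᶜ, β j = 0),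
            (starRingEnd ℂ) (ξ ^ ((∑ j, α j * β j : ZMod q)).val) *
              ∑ γ ∈ Finset.univ.filter
                (fun γ : Fin n → ZMod q =>
                  ∀ j ∈ Finset.univ.filter (fun j => α j ≠ 0), γ j = β j), f γ) ∧
    (∀ g : (Fin n → ZMod q) → ℂ,
      (∀ α, ∑ β ∈ Finset.univ.filter (fun β => hammingDist α β = 1), g β
          = (((q:ℂ)-1)*n - q*h) * g α) →
      (∀ β, wt β ≤ h → f β = g β) → f = g) :=
  stmt14_general q n h ξ f hf
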